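/- arXiv:2509.23227 — 5 statements merged into one kernel-verified Lean document; each statement's English description precedes it below -/
import Mathlib

section
/- For m > 1, d ≥ 1, and π/2 < φ < π, the integral ∫_0^φ (cosθ - cosφ)^{1/(m-1)} sin^{d-1}θ cosθ dθ is nonnegative. -/
open Real

/-- For `m > 1`, `d ≥ 1`, and `π/2 < φ < π`,
`∫₀^φ (cosθ - cosφ)^{1/(m-1)} sin^{d-1}θ cosθ dθ ≥ 0`. -/
theorem stmt_7 (m φ : ℝ) (hm : 1 < m) (d : ℕ) (hd : 1 ≤ d)
    (hφ1 : π / 2 < φ) (hφ2 : φ < π) :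
    0 ≤ ∫ θ in (0:ℝ)..φ,
      (Real.cos θ - Real.cos φ) ^ (1 / (m - 1)) * Real.sin θ ^ (d - 1) * Real.cos θ := by
  have hπ : (0:ℝ) < π := Real.pi_pos
  set p : ℝ := 1 / (m - 1) with hp_def
  have hp : 0 < p := by
    apply div_pos one_pos; linarith
  set f : ℝ → ℝ := fun θ =>
      (Real.cos θ - Real.cos φ) ^ p * Real.sin θ ^ (d - 1) * Real.cos θ with hf_def
  have hrpow_cont : Continuous (fun x : ℝ => x ^ p) := by
    rw [continuous_iff_continuousAt]
    intro x
    exact Real.continuousAt_rpow_const x p (Or.inr hp.le)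
  have hcont : Continuous f := by
    exact ((hrpow_cont.comp (Real.continuous_cos.sub continuous_const)).mul
      (Real.continuous_sin.pow _)).mul Real.continuous_cos
  have h0 : (0:ℝ) ≤ π - φ := by linarith
  have h1 : π - φ ≤ π / 2 := by linarith
  have h2 : π / 2 ≤ φ := hφ1.le
  have hi1 : IntervalIntegrable f MeasureTheory.volume 0 (π - φ) :=
    hcont.intervalIntegrable _ _
  have hi2 : IntervalIntegrable f MeasureTheory.volume (π - φ) (π / 2) :=
    hcont.intervalIntegrable _ _
  have hi3 : IntervalIntegrable f MeasureTheory.volume (π / 2) φ :=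
    hcont.intervalIntegrable _ _
  have hi23 : IntervalIntegrable f MeasureTheory.volume (π - φ) φ :=
    hcont.intervalIntegrable _ _
  have hsplit : (∫ θ in (0:ℝ)..φ, f θ) =
      (∫ θ in (0:ℝ)..(π - φ), f θ) + ((∫ θ in (π - φ)..(π/2), f θ) +
        (∫ θ in (π/2)..φ, f θ)) := by
    rw [intervalIntegral.integral_add_adjacent_intervals hi2 hi3,
      intervalIntegral.integral_add_adjacent_intervals hi1 hi23]
  -- First piece nonneg
  have hA : 0 ≤ ∫ θ in (0:ℝ)..(π - φ), f θ := by
    apply intervalIntegral.integral_nonneg h0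
    intro θ hθ
    obtain ⟨hθ0, hθ1⟩ := hθ
    have hθπ2 : θ ≤ π / 2 := hθ1.trans h1
    have hcosθ : 0 ≤ Real.cos θ :=
      Real.cos_nonneg_of_mem_Icc ⟨by linarith, hθπ2⟩
    have hsin : 0 ≤ Real.sin θ :=
      Real.sin_nonneg_of_nonneg_of_le_pi hθ0 (by linarith)
    have hcc : Real.cos φ ≤ Real.cos θ :=
      Real.cos_le_cos_of_nonneg_of_le_pi hθ0 hφ2.le (by linarith)
    exact mul_nonneg (mul_nonneg (Real.rpow_nonneg (by linarith) p)
      (pow_nonneg hsin _)) hcosθ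
  -- reflection: ∫_{π-φ}^{π/2} f = ∫_{π/2}^{φ} f(π - θ)
  have hrefl : (∫ θ in (π - φ)..(π/2), f θ) = ∫ θ in (π/2)..φ, f (π - θ) := by
    rw [intervalIntegral.integral_comp_sub_left f π, show π - π/2 = π/2 by ring]
  have hirefl : IntervalIntegrable (fun θ => f (π - θ)) MeasureTheory.volume (π/2) φ :=
    (hcont.comp (continuous_const.sub continuous_id)).intervalIntegrable _ _
  have hBC : 0 ≤ (∫ θ in (π - φ)..(π/2), f θ) + (∫ θ in (π/2)..φ, f θ) := by
    rw [hrefl, ← intervalIntegral.integral_add hirefl hi3]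
    apply intervalIntegral.integral_nonneg h2
    intro θ hθ
    obtain ⟨hθ0, hθ1⟩ := hθ
    have hsin : 0 ≤ Real.sin θ :=
      Real.sin_nonneg_of_nonneg_of_le_pi (by linarith) (by linarith)
    have hcosθ : Real.cos θ ≤ 0 :=
      Real.cos_nonpos_of_pi_div_two_le_of_le hθ0 (by linarith)
    have hcc : Real.cos φ ≤ Real.cos θ :=
      Real.cos_le_cos_of_nonneg_of_le_pi (by linarith) hφ2.le hθ1
    have hmono : (Real.cos θ - Real.cos φ) ^ p ≤ (-Real.cos θ - Real.cos φ) ^ p :=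
      Real.rpow_le_rpow (by linarith) (by linarith) hp.le
    have hs : 0 ≤ Real.sin θ ^ (d - 1) := pow_nonneg hsin _
    have key : 0 ≤ Real.sin θ ^ (d - 1) * (-Real.cos θ) *
        ((-Real.cos θ - Real.cos φ) ^ p - (Real.cos θ - Real.cos φ) ^ p) :=
      mul_nonneg (mul_nonneg hs (by linarith)) (by linarith)
    simp only [hf_def, Real.cos_pi_sub, Real.sin_pi_sub]
    nlinarith [key]
  calc (0:ℝ) ≤ (∫ θ in (0:ℝ)..(π - φ), f θ) + ((∫ θ in (π - φ)..(π/2), f θ) +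
        (∫ θ in (π/2)..φ, f θ)) := by linarith
    _ = ∫ θ in (0:ℝ)..φ, f θ := hsplit.symm
end

section
/- For m > 2 and η < -1, ∫_0^π (cosθ - η)^{1/(m-1)-1} sinθ cosθ dθ ≤ 0. -/
open Real

/-- For `m > 2` and `η < -1`, `∫₀^π (cosθ - η)^{1/(m-1) - 1} sinθ cosθ dθ ≤ 0`. -/
theorem stmt_8 (m η : ℝ) (hm : 2 < m) (hη : η < -1) :
    (∫ θ in (0:ℝ)..π,
      (Real.cos θ - η) ^ (1 / (m - 1) - 1) * Real.sin θ * Real.cos θ) ≤ 0 := by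
  set p := 1 / (m - 1) - 1 with hpdef
  set f : ℝ → ℝ := fun θ => (Real.cos θ - η) ^ p * Real.sin θ * Real.cos θ with hf
  have hple : p ≤ 0 := by
    have h1 : 1 / (m - 1) < 1 := by
      rw [div_lt_one (by linarith)]; linarith
    simp only [hpdef]; linarith
  have hpos : ∀ θ : ℝ, 0 < Real.cos θ - η := fun θ => by
    have := Real.neg_one_le_cos θ; linarith
  have hcont : Continuous f := by
    exact ((((Real.continuous_cos.sub continuous_const).rpow_const
      fun x => Or.inl (hpos x).ne').mul Real.continuous_sin).mul Real.continuous_cos)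
  have hsplit : (∫ θ in (0:ℝ)..π, f θ)
      = (∫ θ in (0:ℝ)..(π/2), f θ) + ∫ θ in (π/2)..π, f θ := by
    rw [intervalIntegral.integral_add_adjacent_intervals
      (hcont.intervalIntegrable 0 (π/2)) (hcont.intervalIntegrable (π/2) π)]
  have hsub : (∫ θ in (π/2)..π, f θ) = ∫ θ in (0:ℝ)..(π/2), f (π - θ) := by
    rw [intervalIntegral.integral_comp_sub_left f π, sub_zero, show π - π/2 = π/2 by ring]
  have hcomb : (∫ θ in (0:ℝ)..π, f θ)
      = ∫ θ in (0:ℝ)..(π/2), (f θ + f (π - θ)) := by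
    have h2 : IntervalIntegrable (fun θ : ℝ => f (π - θ)) MeasureTheory.volume 0 (π/2) :=
      Continuous.intervalIntegrable (by fun_prop) 0 (π/2)
    rw [hsplit, hsub,
      ← intervalIntegral.integral_add (hcont.intervalIntegrable 0 (π/2)) h2]
  rw [show (∫ θ in (0:ℝ)..π,
      (Real.cos θ - η) ^ (1 / (m - 1) - 1) * Real.sin θ * Real.cos θ)
      = ∫ θ in (0:ℝ)..π, f θ from rfl, hcomb]
  rw [← neg_nonneg, ← intervalIntegral.integral_neg]
  apply intervalIntegral.integral_nonneg (by positivity)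
  intro θ hθ
  obtain ⟨h0, h2⟩ := hθ
  have hs : 0 ≤ Real.sin θ :=
    Real.sin_nonneg_of_nonneg_of_le_pi h0 (by linarith [Real.pi_pos])
  have hc : 0 ≤ Real.cos θ :=
    Real.cos_nonneg_of_mem_Icc ⟨by linarith [Real.pi_pos], h2⟩
  have hB : 0 < -Real.cos θ - η := by
    have := Real.cos_le_one θ; linarith
  have hAB : -Real.cos θ - η ≤ Real.cos θ - η := by linarith
  have hr : (Real.cos θ - η) ^ p ≤ (-Real.cos θ - η) ^ p :=
    Real.rpow_le_rpow_of_nonpos hB hAB hple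
  simp only [hf, Real.cos_pi_sub, Real.sin_pi_sub, neg_add_rev]
  have key : (Real.cos θ - η) ^ p * Real.sin θ * Real.cos θ
      + (-Real.cos θ - η) ^ p * Real.sin θ * -Real.cos θ
      = Real.sin θ * Real.cos θ * ((Real.cos θ - η) ^ p - (-Real.cos θ - η) ^ p) := by
    ring
  nlinarith [mul_nonpos_of_nonneg_of_nonpos (mul_nonneg hs hc)
    (by linarith : (Real.cos θ - η) ^ p - (-Real.cos θ - η) ^ p ≤ 0)]
end

section
/- For m > 1 and d ≥ 1, lim_{η → -∞} [ ((m-1)/m) (d w_d)^{m-1} (∫_0^π (cosθ-η)^{1/(m-1)} sin^{d-1}θ cosθ dθ)(∫_0^π (cosθ-η)^{1/(m-1)} sin^{d-1}θ dθ)^{m-2} ] = |S^d|^{m-1}/(m(d+1)). -/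
open Real MeasureTheory Filter Topology

/-! With `p = 1/(m-1)` and `s = -η`, integrating by parts against `d(sin^d θ)/d` turns the first
integral into `p/d ∫ (cos θ + s)^(p-1) sin^(d+1) θ dθ`. Both integrals are then of the form
`s^q ∫ (1 + cos θ / s)^q g θ dθ`, and the integral factor tends to `∫ g` by continuity of a
parametric integral at `1/s = 0`. The powers of `s` cancel since `(p - 1) + p (m - 2) = 0`, and
Wallis' recursion `∫ sin^(d+1) = d/(d+1) ∫ sin^(d-1)` produces the constant `1/(d+1)`. -/

theorem tendsto_intervalIntegral_one_add_mul_rpow {a b q : ℝ} {h g : ℝ → ℝ}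
    (hh : Continuous h) (hh1 : ∀ θ, |h θ| ≤ 1) (hg : Continuous g) :
    Tendsto (fun t => ∫ θ in a..b, (1 + t * h θ) ^ q * g θ) (𝓝 0)
      (𝓝 (∫ θ in a..b, g θ)) := by
  have hcont : ContinuousOn (fun t => ∫ θ in a..b, (1 + t * h θ) ^ q * g θ)
      (Set.Ioo (-1) 1) := by
    rw [continuousOn_iff_continuous_domRestrict]
    refine intervalIntegral.continuous_parametric_intervalIntegral_of_continuous' ?_ a b
    refine Continuous.mul (Continuous.rpow_const (by fun_prop) fun x => Or.inl ?_) (by fun_prop)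
    obtain ⟨⟨t, ht⟩, θ⟩ := x
    have hsmall : |t * h θ| < 1 := by
      rw [abs_mul]
      exact (mul_le_of_le_one_right (abs_nonneg t) (hh1 θ)).trans_lt (abs_lt.mpr ht)
    dsimp only
    linarith [neg_abs_le (t * h θ)]
  have h0 : (0 : ℝ) ∈ Set.Ioo (-1) 1 := by norm_num
  simpa using (hcont.continuousAt (isOpen_Ioo.mem_nhds h0)).tendsto

theorem tendsto_intervalIntegral_sub_rpow_div_rpow {a b q : ℝ} {h g : ℝ → ℝ}
    (hh : Continuous h) (hh1 : ∀ θ, |h θ| ≤ 1) (hg : Continuous g) :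
    Tendsto (fun η => (∫ θ in a..b, (h θ - η) ^ q * g θ) / (-η) ^ q) atBot
      (𝓝 (∫ θ in a..b, g θ)) := by
  have ht : Tendsto (fun η : ℝ => (-η)⁻¹) atBot (𝓝 0) :=
    tendsto_inv_atTop_zero.comp tendsto_neg_atBot_atTop
  refine ((tendsto_intervalIntegral_one_add_mul_rpow (a := a) (b := b) (q := q) hh hh1 hg).comp
    ht).congr' ?_
  filter_upwards [eventually_le_atBot (-1)] with η hη
  rw [Function.comp_apply, ← intervalIntegral.integral_div]
  refine intervalIntegral.integral_congr fun θ _ => ?_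
  have hhη : 0 ≤ h θ - η := by linarith [(abs_le.mp (hh1 θ)).1]
  rw [mul_div_right_comm, ← div_rpow hhη (by linarith)]
  congr 2
  field_simp [show η ≠ 0 by linarith]
  ring

theorem integral_cos_sub_rpow_mul_sin_pow_mul_cos {p η : ℝ} (hη : η < -1) (k : ℕ) :
    ∫ θ in (0:ℝ)..π, (cos θ - η) ^ p * sin θ ^ k * cos θ
      = p / (k + 1) * ∫ θ in (0:ℝ)..π, (cos θ - η) ^ (p - 1) * sin θ ^ (k + 2) := by
  have hpos : ∀ θ, 0 < cos θ - η := fun θ => by linarith [neg_one_le_cos θ]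
  have hu : ∀ θ ∈ Set.uIcc (0:ℝ) π, HasDerivAt (fun θ => (cos θ - η) ^ p)
      (p * (cos θ - η) ^ (p - 1) * -sin θ) θ := fun θ _ => by
    convert ((hasDerivAt_cos θ).sub_const η).rpow_const (p := p) (Or.inl (hpos θ).ne') using 1
    ring
  have hv : ∀ θ ∈ Set.uIcc (0:ℝ) π, HasDerivAt (fun θ => sin θ ^ (k + 1) / (k + 1))
      (sin θ ^ k * cos θ) θ := fun θ _ => by
    refine (((hasDerivAt_sin θ).pow (k + 1)).div_const ((k : ℝ) + 1)).congr_deriv ?_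
    simp only [Nat.add_sub_cancel]
    push_cast
    field_simp
  have hu' : Continuous fun θ => p * (cos θ - η) ^ (p - 1) * -sin θ := by
    have := (continuous_cos.sub continuous_const).rpow_const (p := p - 1)
      fun θ => Or.inl (hpos θ).ne'
    fun_prop
  have := intervalIntegral.integral_mul_deriv_eq_deriv_mul hu hv (hu'.intervalIntegrable _ _)
    ((by fun_prop : Continuous fun θ => sin θ ^ k * cos θ).intervalIntegrable _ _)
  simp only [sin_pi, sin_zero, zero_pow (Nat.succ_ne_zero k), zero_div, mul_zero, sub_zero,
    zero_sub] at this
  simp only [mul_assoc, this, ← intervalIntegral.integral_neg,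
    ← intervalIntegral.integral_const_mul]
  refine intervalIntegral.integral_congr fun θ _ => ?_
  ring

theorem rpow_mul_mul_rpow_mul_rpow_of_add_mul_eq_zero {s X Y a b e : ℝ} (hs : 0 < s)
    (hY : 0 ≤ Y) (h : a + b * e = 0) : s ^ a * X * (s ^ b * Y) ^ e = X * Y ^ e := by
  rw [mul_rpow (rpow_nonneg hs.le b) hY, ← rpow_mul hs.le, mul_comm (s ^ a), mul_assoc X,
    ← mul_assoc (s ^ a), ← rpow_add hs, h, rpow_zero, one_mul]

theorem tendsto_integral_cos_sub_rpow_mul_integral_rpow (k : ℕ) {p e : ℝ}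
    (hpe : p - 1 + p * e = 0) :
    Tendsto (fun η : ℝ => (∫ θ in (0:ℝ)..π, (cos θ - η) ^ p * sin θ ^ k * cos θ)
        * (∫ θ in (0:ℝ)..π, (cos θ - η) ^ p * sin θ ^ k) ^ e)
      atBot (𝓝 (p / (k + 2) * (∫ θ in (0:ℝ)..π, sin θ ^ k) ^ (e + 1))) := by
  have h₁ := tendsto_intervalIntegral_sub_rpow_div_rpow (a := 0) (b := π) (q := p - 1)
    (g := fun θ => sin θ ^ (k + 2)) continuous_cos abs_cos_le_one (by fun_prop)
  have h₂ := tendsto_intervalIntegral_sub_rpow_div_rpow (a := 0) (b := π) (q := p)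
    (g := fun θ => sin θ ^ k) continuous_cos abs_cos_le_one (by fun_prop)
  have hlim := (h₁.const_mul (p / (k + 1))).mul
    (h₂.rpow_const (p := e) (Or.inl (integral_sin_pow_pos k).ne'))
  have hval : p / (k + 1) * (∫ θ in (0:ℝ)..π, sin θ ^ (k + 2))
        * (∫ θ in (0:ℝ)..π, sin θ ^ k) ^ e
      = p / (k + 2) * (∫ θ in (0:ℝ)..π, sin θ ^ k) ^ (e + 1) := by
    rw [integral_sin_pow, rpow_add_one (integral_sin_pow_pos k).ne']
    simp only [sin_zero, sin_pi, zero_pow (Nat.succ_ne_zero k), zero_mul, sub_zero, zero_div,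
      zero_add]
    field_simp
  rw [← hval]
  refine hlim.congr' ?_
  filter_upwards [eventually_lt_atBot (-1)] with η hη
  have hs : 0 < -η := by linarith
  have hI₂ : 0 ≤ ∫ θ in (0:ℝ)..π, (cos θ - η) ^ p * sin θ ^ k :=
    intervalIntegral.integral_nonneg pi_pos.le fun θ hθ => mul_nonneg
      (rpow_nonneg (by linarith [neg_one_le_cos θ]) p)
      (pow_nonneg (sin_nonneg_of_nonneg_of_le_pi hθ.1 hθ.2) k)
  have key := rpow_mul_mul_rpow_mul_rpow_of_add_mul_eq_zero
    (X := (∫ θ in (0:ℝ)..π, (cos θ - η) ^ (p - 1) * sin θ ^ (k + 2)) / (-η) ^ (p - 1))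
    hs (div_nonneg hI₂ (rpow_nonneg hs.le p)) hpe
  rw [mul_div_cancel₀ _ (rpow_pos_of_pos hs _).ne',
    mul_div_cancel₀ _ (rpow_pos_of_pos hs _).ne'] at key
  rw [integral_cos_sub_rpow_mul_sin_pow_mul_cos hη]
  linear_combination -(p / (k + 1)) * key

/-- For `m > 1` and `d ≥ 1`, as `η → -∞`,
`((m-1)/m) (d w_d)^{m-1} (∫₀^π (cosθ-η)^{1/(m-1)} sin^{d-1}θ cosθ dθ)
  (∫₀^π (cosθ-η)^{1/(m-1)} sin^{d-1}θ dθ)^{m-2} → |S^d|^{m-1}/(m(d+1))`,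
where `w_d` is the volume of the `d`-dimensional unit ball and
`|S^d| = d w_d ∫₀^π sin^{d-1}θ dθ`. -/
theorem stmt_11 (m : ℝ) (hm : 1 < m) (d : ℕ) (hd : 1 ≤ d)
    (wd : ℝ) (hwd : wd = (volume (Metric.ball (0 : EuclideanSpace ℝ (Fin d)) 1)).toReal)
    (Sd : ℝ) (hSd : Sd = d * wd * ∫ θ in (0:ℝ)..π, Real.sin θ ^ (d - 1)) :
    Tendsto (fun η : ℝ =>
      ((m - 1) / m) * (d * wd) ^ (m - 1)
        * (∫ θ in (0:ℝ)..π, (Real.cos θ - η) ^ (1 / (m - 1)) * Real.sin θ ^ (d - 1) * Real.cos θ)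
        * (∫ θ in (0:ℝ)..π, (Real.cos θ - η) ^ (1 / (m - 1)) * Real.sin θ ^ (d - 1)) ^ (m - 2))
      atBot (nhds (Sd ^ (m - 1) / (m * (d + 1)))) := by
  obtain ⟨k, rfl⟩ : ∃ k, d = k + 1 := ⟨d - 1, by omega⟩
  simp only [Nat.add_sub_cancel] at hSd ⊢
  have hm₁ : m - 1 ≠ 0 := by linarith
  have hexp : 1 / (m - 1) - 1 + 1 / (m - 1) * (m - 2) = 0 := by
    field_simp
    ring
  have hwd₀ : 0 ≤ wd := hwd ▸ ENNReal.toReal_nonneg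
  convert (tendsto_integral_cos_sub_rpow_mul_integral_rpow k hexp).const_mul
    ((m - 1) / m * ((k + 1 : ℕ) * wd) ^ (m - 1)) using 2
  · ring
  · rw [hSd, mul_rpow (by positivity) (integral_sin_pow_pos k).le,
      show m - 2 + 1 = m - 1 by ring]
    push_cast
    field_simp
    ring
end

section
/- For m > 1 and d ≥ 1, ∫_0^π (cosθ+1)^{1/(m-1)} sin^{d-1}θ cosθ dθ = 2^{1/(m-1)+d-1} · (Γ(1/(m-1)+d/2) Γ(d/2) / Γ(1/(m-1)+d)) · (1/(1 + d(m-1))). -/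
open Real MeasureTheory intervalIntegral Set
open scoped Interval


lemma betaInt {a b : ℝ} (ha : 0 < a) (hb : 0 < b) :
    IntervalIntegrable (fun x : ℝ => x ^ (a - 1) * (1 - x) ^ (b - 1)) volume 0 1 := by
  have hc := Complex.betaIntegral_convergent (u := (a : ℂ)) (v := (b : ℂ))
    (by simpa using ha) (by simpa using hb)
  rw [intervalIntegrable_iff_integrableOn_Ioc_of_le (by norm_num)] at hc ⊢
  refine (hc.re).congr (Filter.EventuallyEq.filter_mono (Filter.eventually_of_mem (self_mem_ae_restrict measurableSet_Ioc) ?_) le_rfl)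
  intro x hx
  have hx0 : (0:ℝ) ≤ x := hx.1.le
  have hx1 : (0:ℝ) ≤ 1 - x := by linarith [hx.2]
  simp only [Function.comp]
  have h1 : ((a:ℂ) - 1) = ((a - 1 : ℝ) : ℂ) := by push_cast; ring
  have h2 : ((b:ℂ) - 1) = ((b - 1 : ℝ) : ℂ) := by push_cast; ring
  have h3 : ((1:ℂ) - (x:ℂ)) = ((1 - x : ℝ) : ℂ) := by push_cast; ring
  rw [h1, h2, h3, ← Complex.ofReal_cpow hx0, ← Complex.ofReal_cpow hx1,
    ← Complex.ofReal_mul]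
  simp

lemma betaVal {a b : ℝ} (ha : 0 < a) (hb : 0 < b) :
    ∫ x in (0:ℝ)..1, x ^ (a - 1) * (1 - x) ^ (b - 1)
      = Real.Gamma a * Real.Gamma b / Real.Gamma (a + b) := by
  have key : Complex.Gamma a * Complex.Gamma b
      = Complex.Gamma ((a:ℂ) + b) * Complex.betaIntegral a b :=
    Complex.Gamma_mul_Gamma_eq_betaIntegral (by simpa using ha) (by simpa using hb)
  have hcast : Complex.betaIntegral a b
      = ((∫ x in (0:ℝ)..1, x ^ (a - 1) * (1 - x) ^ (b - 1) : ℝ) : ℂ) := by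
    rw [Complex.betaIntegral, ← intervalIntegral.integral_ofReal]
    refine intervalIntegral.integral_congr ?_
    intro x hx
    rw [Set.uIcc_of_le (by norm_num : (0:ℝ) ≤ 1)] at hx
    have hx0 : (0:ℝ) ≤ x := hx.1
    have hx1 : (0:ℝ) ≤ 1 - x := by linarith [hx.2]
    have h1 : ((a:ℂ) - 1) = ((a - 1 : ℝ) : ℂ) := by push_cast; ring
    have h2 : ((b:ℂ) - 1) = ((b - 1 : ℝ) : ℂ) := by push_cast; ring
    have h3 : ((1:ℂ) - (x:ℂ)) = ((1 - x : ℝ) : ℂ) := by push_cast; ring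
    simp only [h1, h2, h3, ← Complex.ofReal_cpow hx0, ← Complex.ofReal_cpow hx1,
      ← Complex.ofReal_mul]
  rw [hcast] at key
  have hab : Real.Gamma (a + b) ≠ 0 := (Real.Gamma_pos_of_pos (by linarith)).ne'
  have : ((a:ℂ) + b) = ((a + b : ℝ) : ℂ) := by push_cast; ring
  rw [this, Complex.Gamma_ofReal, Complex.Gamma_ofReal, Complex.Gamma_ofReal,
    ← Complex.ofReal_mul, ← Complex.ofReal_mul] at key
  have := Complex.ofReal_injective key
  field_simp
  linarith [this]

lemma key (α : ℝ) (hα : 0 < α) (d : ℕ) (hd : 1 ≤ d) :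
    ∫ θ in (0:ℝ)..π, (Real.cos θ + 1) ^ α * Real.sin θ ^ (d - 1) * Real.cos θ
      = 2 ^ (α + d - 1)
        * (Real.Gamma (α + d / 2) * Real.Gamma (d / 2) / Real.Gamma (α + d))
        * (α / (α + d)) := by
  have hd1 : (1:ℝ) ≤ (d:ℝ) := by exact_mod_cast hd
  set a : ℝ := α + (d:ℝ)/2 with ha_def
  set b : ℝ := (d:ℝ)/2 with hb_def
  have ha : 0 < a := by positivity
  have hb : 0 < b := by simp only [hb_def]; positivity
  have ha1 : 0 < a + 1 := by linarith
  set g : ℝ → ℝ := fun t =>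
    2 ^ (α + (d:ℝ) - 1) * (t ^ (a-1) * (1-t) ^ (b-1))
      - 2 ^ (α + (d:ℝ)) * (t ^ a * (1-t) ^ (b-1)) with hg_def
  set f : ℝ → ℝ := fun θ => (1 + Real.cos θ)/2 with hf_def
  set f' : ℝ → ℝ := fun θ => -Real.sin θ/2 with hf'_def
  -- pointwise identity on Ioc 0 π
  have hpt : ∀ θ ∈ Ioc (0:ℝ) π,
      (Real.cos θ + 1) ^ α * Real.sin θ ^ (d - 1) * Real.cos θ = f' θ • (g ∘ f) θ := by
    intro θ hθ
    rcases eq_or_lt_of_le hθ.2 with hpi | hpi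
    · subst hpi
      simp [hα.ne', Real.zero_rpow, hg_def, hf'_def, smul_eq_mul]
    · -- θ ∈ Ioo 0 π
      set s := Real.sin θ with hs_def
      set c := Real.cos θ with hc_def
      have hs : 0 < s := Real.sin_pos_of_pos_of_lt_pi hθ.1 hpi
      have hsc : s^2 + c^2 = 1 := Real.sin_sq_add_cos_sq θ
      have hc1 : -1 < c := by nlinarith
      have hc1' : c < 1 := by nlinarith
      set t : ℝ := (1 + c)/2 with ht_def
      have ht : 0 < t := by simp only [ht_def]; linarith
      have h1t : 0 < 1 - t := by simp only [ht_def]; linarith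
      have hft : f θ = t := rfl
      have hta : t ^ a = t ^ (a-1) * t := by
        rw [← Real.rpow_add_one ht.ne' (a-1)]; norm_num
      have h2p : (2:ℝ) ^ (α + (d:ℝ)) = 2 ^ (α + (d:ℝ) - 1) * 2 := by
        rw [← Real.rpow_add_one (by norm_num : (2:ℝ) ≠ 0)]; norm_num
      have A : t ^ (a-1) * (1-t) ^ (b-1) = t ^ α * (s/2) ^ ((d:ℝ)-2) := by
        have hab : a - 1 = α + (b-1) := by simp only [ha_def, hb_def]; ring
        rw [hab, Real.rpow_add ht, mul_assoc, ← Real.mul_rpow ht.le h1t.le]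
        congr 1
        have ht1t : t * (1-t) = (s/2) ^ (2:ℕ) := by
          simp only [ht_def]; field_simp; nlinarith
        rw [ht1t, ← Real.rpow_natCast (s/2) 2, ← Real.rpow_mul (by positivity)]
        norm_num
        congr 1
        simp only [hb_def]; ring
      have B : t ^ α = (c+1) ^ α / 2 ^ α := by
        rw [ht_def, Real.div_rpow (by linarith) (by norm_num)]
        norm_num [add_comm]
      have C : (2:ℝ) ^ (α + (d:ℝ) - 1) / 2 ^ α = 2 ^ ((d:ℝ) - 1) := by
        rw [← Real.rpow_sub (by norm_num : (0:ℝ) < 2)]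
        ring_nf
      have D : (s/2) * (s/2) ^ ((d:ℝ)-2) = (s/2) ^ ((d:ℝ)-1) := by
        rw [show (d:ℝ)-1 = ((d:ℝ)-2) + 1 by ring, Real.rpow_add_one (by positivity : (s/2:ℝ) ≠ 0)]
        ring
      have E : (2:ℝ) ^ ((d:ℝ)-1) * (s/2) ^ ((d:ℝ)-1) = s ^ ((d:ℝ)-1) := by
        rw [← Real.mul_rpow (by norm_num) (by positivity)]
        congr 1
        ring
      have F : s ^ ((d:ℝ)-1) = s ^ (d-1 : ℕ) := by
        rw [← Real.rpow_natCast s (d-1), Nat.cast_sub hd, Nat.cast_one]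
      have h2α : (0:ℝ) < 2 ^ α := Real.rpow_pos_of_pos (by norm_num) α
      -- now assemble
      have expand : f' θ • (g ∘ f) θ
          = (s/2) * (2 ^ (α + (d:ℝ) - 1) * (t ^ (a-1) * (1-t) ^ (b-1)) * (2*t - 1)) := by
        simp only [Function.comp, hft, smul_eq_mul, hg_def, hf'_def, hta, h2p]
        ring
      have h2t : 2*t - 1 = c := by simp only [ht_def]; ring
      rw [expand, h2t, A, B]
      rw [show (s/2) * (2 ^ (α + (d:ℝ) - 1) * ((c+1)^α / 2^α * (s/2)^((d:ℝ)-2)) * c)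
          = (c+1)^α * ((2 ^ (α + (d:ℝ) - 1) / 2^α) * ((s/2) * (s/2)^((d:ℝ)-2))) * c by
        field_simp]
      rw [D, C, E, F]
  -- substitution
  have hsub : (∫ θ in (0:ℝ)..π, f' θ • (g ∘ f) θ) = ∫ t in (f 0)..(f π), g t := by
    apply intervalIntegral.integral_comp_smul_deriv'''
    · fun_prop
    · intro x hx
      have : HasDerivAt f (f' x) x := by
        simpa [hf'_def, neg_div] using ((Real.hasDerivAt_cos x).const_add 1).div_const 2
      exact this.hasDerivWithinAt
    · -- continuity of g on f '' Ioo
      have himg : f '' Ioo (min 0 π) (max 0 π) ⊆ Ioo 0 1 := by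
        rintro _ ⟨x, hx, rfl⟩
        rw [min_eq_left pi_pos.le, max_eq_right pi_pos.le] at hx
        have hs : 0 < Real.sin x := Real.sin_pos_of_pos_of_lt_pi hx.1 hx.2
        have hsc := Real.sin_sq_add_cos_sq x
        constructor
        · simp only [hf_def]; nlinarith
        · simp only [hf_def]; nlinarith
      refine ContinuousOn.mono ?_ himg
      have c1 : ContinuousOn (fun t : ℝ => t ^ (a-1)) (Ioo 0 1) :=
        ContinuousOn.rpow_const continuousOn_id (fun x hx => Or.inl hx.1.ne')
      have c2 : ContinuousOn (fun t : ℝ => (1-t) ^ (b-1)) (Ioo 0 1) :=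
        ContinuousOn.rpow_const (continuousOn_const.sub continuousOn_id)
          (fun x hx => Or.inl (by simp; linarith [hx.2]))
      have c3 : ContinuousOn (fun t : ℝ => t ^ a) (Ioo 0 1) :=
        ContinuousOn.rpow_const continuousOn_id (fun x hx => Or.inl hx.1.ne')
      exact ((continuousOn_const.mul (c1.mul c2)).sub (continuousOn_const.mul (c3.mul c2)))
    · -- integrability of g on f '' [[0,π]]
      have himg : f '' [[(0:ℝ), π]] ⊆ Icc 0 1 := by
        rintro _ ⟨x, hx, rfl⟩
        have := Real.neg_one_le_cos x
        have := Real.cos_le_one x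
        constructor <;> (simp only [hf_def]; linarith)
      refine IntegrableOn.mono_set ?_ himg
      rw [integrableOn_Icc_iff_integrableOn_Ioc]
      have i1 := (betaInt ha hb).const_mul ((2:ℝ) ^ (α + (d:ℝ) - 1))
      have i2 := (betaInt ha1 hb).const_mul ((2:ℝ) ^ (α + (d:ℝ)))
      rw [intervalIntegrable_iff_integrableOn_Ioc_of_le (by norm_num)] at i1 i2
      simp only [add_sub_cancel_right] at i2
      exact i1.sub i2
    · -- integrability of f' • g∘f on [[0,π]]
      rw [uIcc_of_le pi_pos.le, integrableOn_Icc_iff_integrableOn_Ioc]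
      have hcont : Continuous fun θ => (Real.cos θ + 1) ^ α * Real.sin θ ^ (d - 1) * Real.cos θ := by
        apply Continuous.mul
        apply Continuous.mul
        · exact (Real.continuous_cos.add continuous_const).rpow_const (fun x => Or.inr hα.le)
        · exact Real.continuous_sin.pow _
        · exact Real.continuous_cos
      exact (hcont.integrableOn_Ioc).congr_fun hpt measurableSet_Ioc
  -- put it together
  have hmain : (∫ θ in (0:ℝ)..π, (Real.cos θ + 1) ^ α * Real.sin θ ^ (d - 1) * Real.cos θ)
      = ∫ t in (f 0)..(f π), g t := by
    rw [← hsub]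
    refine intervalIntegral.integral_congr_ae ?_
    filter_upwards with x hx
    rw [uIoc_of_le pi_pos.le] at hx
    exact hpt x hx
  have hf0 : f 0 = 1 := by simp [hf_def]
  have hfπ : f π = 0 := by simp [hf_def]
  rw [hmain, hf0, hfπ, intervalIntegral.integral_symm]
  -- evaluate ∫ g over 0..1
  have ibeta2 : IntervalIntegrable (fun t : ℝ => t ^ a * (1-t) ^ (b-1)) volume 0 1 := by
    have := betaInt ha1 hb
    simpa only [add_sub_cancel_right] using this
  have hsplit : (∫ t in (0:ℝ)..1, g t)
      = 2 ^ (α + (d:ℝ) - 1) * (∫ t in (0:ℝ)..1, t ^ (a-1) * (1-t) ^ (b-1))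
        - 2 ^ (α + (d:ℝ)) * (∫ t in (0:ℝ)..1, t ^ a * (1-t) ^ (b-1)) := by
    rw [← intervalIntegral.integral_const_mul, ← intervalIntegral.integral_const_mul,
      ← intervalIntegral.integral_sub ((betaInt ha hb).const_mul _) (ibeta2.const_mul _)]
  have hbeta2 : (∫ t in (0:ℝ)..1, t ^ a * (1-t) ^ (b-1))
      = Real.Gamma (a+1) * Real.Gamma b / Real.Gamma (a+1+b) := by
    rw [← betaVal ha1 hb]
    simp only [add_sub_cancel_right]
  rw [hsplit, betaVal ha hb, hbeta2]
  have hΓa : Real.Gamma (a+1) = a * Real.Gamma a := Real.Gamma_add_one ha.ne'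
  have hΓab : Real.Gamma (a+1+b) = (a+b) * Real.Gamma (a+b) := by
    rw [show a+1+b = (a+b)+1 by ring, Real.Gamma_add_one (by positivity)]
  rw [hΓa, hΓab]
  have hab : a + b = α + (d:ℝ) := by simp only [ha_def, hb_def]; ring
  have hΓpos : 0 < Real.Gamma (a+b) := Real.Gamma_pos_of_pos (by positivity)
  rw [← hab]
  have h2p' : (2:ℝ) ^ (a + b) = 2 ^ (a + b - 1) * 2 := by
    rw [← Real.rpow_add_one (by norm_num : (2:ℝ) ≠ 0)]; norm_num
  have habpos : (0:ℝ) < a + b := by positivity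
  have hα' : α = a - b := by simp only [ha_def, hb_def]; ring
  rw [h2p', hα']
  field_simp
  ring


/-- For `m > 1` and `d ≥ 1`,
`∫₀^π (cosθ+1)^{1/(m-1)} sin^{d-1}θ cosθ dθ
  = 2^{1/(m-1)+d-1} (Γ(1/(m-1)+d/2) Γ(d/2) / Γ(1/(m-1)+d)) (1/(1+d(m-1)))`. -/
theorem stmt_13 (m : ℝ) (hm : 1 < m) (d : ℕ) (hd : 1 ≤ d) :
    ∫ θ in (0:ℝ)..π, (Real.cos θ + 1) ^ (1 / (m - 1)) * Real.sin θ ^ (d - 1) * Real.cos θ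
      = (2 : ℝ) ^ (1 / (m - 1) + d - 1)
        * (Real.Gamma (1 / (m - 1) + d / 2) * Real.Gamma (d / 2)
            / Real.Gamma (1 / (m - 1) + d))
        * (1 / (1 + d * (m - 1))) := by
  have hm1 : 0 < m - 1 := by linarith
  have hα : 0 < 1 / (m - 1) := by positivity
  rw [key (1 / (m - 1)) hα d hd]
  congr 1
  have hdpos : (0:ℝ) < (d:ℝ) := by exact_mod_cast Nat.lt_of_lt_of_le Nat.zero_lt_one hd
  rw [div_eq_div_iff (by positivity) (by positivity)]
  field_simp
end

section
/- Let m > 1, d ≥ 1, κ > 0, and consider E[ρ] = (1/(m-1))∫_{S^d} ρ^m dS - (κ/2)||c_ρ||² + κ/2 on absolutely continuous probability densities on S^d. If ρ is a global minimizer of E and R is a rotation of S^d fixing c_ρ, then R_#ρ = ρ; consequently every global minimizer is invariant under all rotations preserving its centre of mass. -/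
/-!
Average the minimizer `ρ` with its rotation `ρ ∘ R⁻¹`. Rotations preserve the surface measure,
so the rotated density is again admissible with the same `∫ ρ ^ m`, and since `R` fixes `c_ρ`
it has the same centre of mass; hence the average is an admissible competitor with centre `c_ρ`.
Minimality then says that averaging does not lower `∫ ρ ^ m`, whereas strict convexity of
`t ↦ t ^ m` makes it strictly lower unless the two densities agree almost everywhere.
-/

open MeasureTheory

section RpowMidpoint

variable {m a b : ℝ}

lemma rpow_midpoint_le (hm : 1 ≤ m) (ha : 0 ≤ a) (hb : 0 ≤ b) :
    ((a + b) / 2) ^ m ≤ (a ^ m + b ^ m) / 2 := by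
  have h := (convexOn_rpow hm).2 ha hb (by norm_num : (0 : ℝ) ≤ 1 / 2)
    (by norm_num : (0 : ℝ) ≤ 1 / 2) (by norm_num)
  simp only [smul_eq_mul] at h
  calc ((a + b) / 2) ^ m = (1 / 2 * a + 1 / 2 * b) ^ m := by ring_nf
    _ ≤ 1 / 2 * a ^ m + 1 / 2 * b ^ m := h
    _ = (a ^ m + b ^ m) / 2 := by ring

lemma rpow_midpoint_lt (hm : 1 < m) (ha : 0 ≤ a) (hb : 0 ≤ b) (hab : a ≠ b) :
    ((a + b) / 2) ^ m < (a ^ m + b ^ m) / 2 := by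
  have h := (strictConvexOn_rpow hm).2 ha hb hab (by norm_num : (0 : ℝ) < 1 / 2)
    (by norm_num : (0 : ℝ) < 1 / 2) (by norm_num)
  simp only [smul_eq_mul] at h
  calc ((a + b) / 2) ^ m = (1 / 2 * a + 1 / 2 * b) ^ m := by ring_nf
    _ < 1 / 2 * a ^ m + 1 / 2 * b ^ m := h
    _ = (a ^ m + b ^ m) / 2 := by ring

end RpowMidpoint

section IntegralRpowMidpoint

variable {α : Type*} [MeasurableSpace α] {μ : Measure α} {m : ℝ} {f g : α → ℝ}

lemma integrable_rpow_midpoint (hm : 1 ≤ m) (hf0 : ∀ x, 0 ≤ f x) (hg0 : ∀ x, 0 ≤ g x)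
    (hf : AEStronglyMeasurable f μ) (hg : AEStronglyMeasurable g μ)
    (hfm : Integrable (fun x => f x ^ m) μ) (hgm : Integrable (fun x => g x ^ m) μ) :
    Integrable (fun x => ((f x + g x) / 2) ^ m) μ := by
  refine ((hfm.add hgm).div_const 2).mono'
    ((Real.continuous_rpow_const (by linarith)).comp_aestronglyMeasurable
      ((hf.add hg).aemeasurable.div_const 2).aestronglyMeasurable)
    (Filter.Eventually.of_forall fun x => ?_)
  rw [Real.norm_of_nonneg (Real.rpow_nonneg (by linarith [hf0 x, hg0 x]) m)]
  exact rpow_midpoint_le hm (hf0 x) (hg0 x)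

lemma ae_eq_of_integral_rpow_le_integral_rpow_midpoint (hm : 1 < m)
    (hf0 : ∀ x, 0 ≤ f x) (hg0 : ∀ x, 0 ≤ g x)
    (hfm : Integrable (fun x => f x ^ m) μ) (hgm : Integrable (fun x => g x ^ m) μ)
    (hmid : Integrable (fun x => ((f x + g x) / 2) ^ m) μ)
    (h : (∫ x, f x ^ m ∂μ + ∫ x, g x ^ m ∂μ) / 2 ≤ ∫ x, ((f x + g x) / 2) ^ m ∂μ) :
    f =ᵐ[μ] g := by
  set defect := fun x => (f x ^ m + g x ^ m) / 2 - ((f x + g x) / 2) ^ m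
  have hmean : Integrable (fun x => (f x ^ m + g x ^ m) / 2) μ := (hfm.add hgm).div_const 2
  have hdefect_int : Integrable defect μ := hmean.sub hmid
  have hdefect_nonneg : 0 ≤ defect := fun x =>
    sub_nonneg.mpr (rpow_midpoint_le hm.le (hf0 x) (hg0 x))
  have hdefect_zero : defect =ᵐ[μ] 0 := by
    rw [← integral_eq_zero_iff_of_nonneg hdefect_nonneg hdefect_int]
    refine le_antisymm ?_ (integral_nonneg hdefect_nonneg)
    simp only [defect]
    rw [integral_sub hmean hmid, integral_div, integral_add hfm hgm]
    linarith
  filter_upwards [hdefect_zero] with x hx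
  by_contra hne
  have := rpow_midpoint_lt hm (hf0 x) (hg0 x) hne
  simp only [defect, Pi.zero_apply] at hx
  linarith

end IntegralRpowMidpoint

section Rotation

variable {E : Type*} [NormedAddCommGroup E] [NormedSpace ℝ E] [MeasurableSpace E]

lemma LinearIsometryEquiv.measurePreserving_hausdorffMeasure_restrict_sphere [BorelSpace E]
    (R : E ≃ₗᵢ[ℝ] E) (s r : ℝ) :
    MeasurePreserving R (μH[s].restrict (Metric.sphere 0 r))
      (μH[s].restrict (Metric.sphere 0 r)) := by
  have h := (R.toIsometryEquiv.measurePreserving_hausdorffMeasure s).restrict_preimage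
    (Metric.isClosed_sphere (x := (0 : E)) (ε := r)).measurableSet
  rw [R.toIsometryEquiv.preimage_sphere] at h
  simpa using h

lemma integral_comp_symm_smul_eq_map_integral_smul [CompleteSpace E] [BorelSpace E]
    {μ : Measure E} (R : E ≃ₗᵢ[ℝ] E) (hR : MeasurePreserving R μ μ) (ρ : E → ℝ) :
    ∫ x, ρ (R.symm x) • x ∂μ = R (∫ x, ρ x • x ∂μ) := by
  calc ∫ x, ρ (R.symm x) • x ∂μ = ∫ y, ρ (R.symm (R y)) • R y ∂μ :=
        (hR.integral_comp R.toHomeomorph.measurableEmbedding _).symm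
    _ = ∫ y, R (ρ y • y) ∂μ := by simp only [R.symm_apply_apply, map_smul]
    _ = R (∫ x, ρ x • x ∂μ) := R.toLinearIsometry.integral_comp_comm _

lemma MeasureTheory.Integrable.smul_id_of_ae_norm_le [OpensMeasurableSpace E]
    [SecondCountableTopology E] {μ : Measure E} {ρ : E → ℝ} {C : ℝ} (hρ : Integrable ρ μ)
    (hC : ∀ᵐ x ∂μ, ‖x‖ ≤ C) :
    Integrable (fun x => ρ x • x) μ :=
  hρ.smul_of_top_left (memLp_top_of_bound aestronglyMeasurable_id C hC)

end Rotation

theorem stmt_19_general (d : ℕ) (m κ : ℝ) (hm : 1 < m)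
    (μ : Measure (EuclideanSpace ℝ (Fin (d + 1))))
    (hμ : μ = (μH[(d : ℝ)]).restrict (Metric.sphere (0 : EuclideanSpace ℝ (Fin (d + 1))) 1))
    (E : (EuclideanSpace ℝ (Fin (d + 1)) → ℝ) → ℝ)
    (hE : ∀ ρ : EuclideanSpace ℝ (Fin (d + 1)) → ℝ,
      E ρ = (1 / (m - 1)) * (∫ x, ρ x ^ m ∂μ)
        - (κ / 2) * ‖∫ x, ρ x • x ∂μ‖ ^ 2 + κ / 2)
    (ρ : EuclideanSpace ℝ (Fin (d + 1)) → ℝ)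
    (hρ0 : ∀ x, 0 ≤ ρ x) (hρint : Integrable ρ μ)
    (hρm : Integrable (fun x => ρ x ^ m) μ)
    (hρ1 : ∫ x, ρ x ∂μ = 1)
    (hmin : ∀ σ : EuclideanSpace ℝ (Fin (d + 1)) → ℝ,
      (∀ x, 0 ≤ σ x) → Integrable σ μ → Integrable (fun x => σ x ^ m) μ →
      (∫ x, σ x ∂μ) = 1 → E ρ ≤ E σ)
    (R : EuclideanSpace ℝ (Fin (d + 1)) ≃ₗᵢ[ℝ] EuclideanSpace ℝ (Fin (d + 1)))
    (hR : R (∫ x, ρ x • x ∂μ) = ∫ x, ρ x • x ∂μ) :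
    (fun x => ρ (R.symm x)) =ᵐ[μ] ρ := by
  have hRμ : MeasurePreserving R μ μ :=
    hμ ▸ R.measurePreserving_hausdorffMeasure_restrict_sphere _ _
  have hRμ_symm : MeasurePreserving R.symm μ μ :=
    hμ ▸ R.symm.measurePreserving_hausdorffMeasure_restrict_sphere _ _
  have hemb : MeasurableEmbedding R.symm := R.symm.toHomeomorph.measurableEmbedding
  have hnorm : ∀ᵐ x ∂μ, ‖x‖ ≤ 1 := hμ ▸
    (ae_restrict_mem Metric.isClosed_sphere.measurableSet).mono
      fun x hx => (mem_sphere_zero_iff_norm.mp hx).le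
  set τ := fun x => ρ (R.symm x)
  have hτint : Integrable τ μ := (hRμ_symm.integrable_comp_emb hemb).mpr hρint
  have hτm : Integrable (fun x => τ x ^ m) μ := (hRμ_symm.integrable_comp_emb hemb).mpr hρm
  have hτc : ∫ x, τ x • x ∂μ = ∫ x, ρ x • x ∂μ :=
    (integral_comp_symm_smul_eq_map_integral_smul R hRμ ρ).trans hR
  set σ := fun x => (τ x + ρ x) / 2
  have hσ1 : ∫ x, σ x ∂μ = 1 := by
    rw [integral_div, integral_add hτint hρint, hRμ_symm.integral_comp hemb, hρ1]
    norm_num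
  have hσc : ∫ x, σ x • x ∂μ = ∫ x, ρ x • x ∂μ := by
    simp only [σ, div_eq_inv_mul, mul_smul, add_smul]
    rw [integral_smul, integral_add (hτint.smul_id_of_ae_norm_le hnorm)
      (hρint.smul_id_of_ae_norm_le hnorm), hτc, ← two_smul ℝ, smul_smul]
    norm_num
  have hσm : Integrable (fun x => σ x ^ m) μ := integrable_rpow_midpoint hm.le
    (fun x => hρ0 _) hρ0 hτint.aestronglyMeasurable hρint.aestronglyMeasurable hτm hρm
  have hle : ∫ x, ρ x ^ m ∂μ ≤ ∫ x, σ x ^ m ∂μ := by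
    have h := hmin σ (fun x => div_nonneg (add_nonneg (hρ0 _) (hρ0 x)) zero_le_two)
      ((hτint.add hρint).div_const 2) hσm hσ1
    rw [hE, hE, hσc] at h
    exact le_of_mul_le_mul_left (by linarith) (one_div_pos.mpr (sub_pos.mpr hm))
  refine ae_eq_of_integral_rpow_le_integral_rpow_midpoint hm (fun x => hρ0 _) hρ0 hτm hρm hσm ?_
  rw [hRμ_symm.integral_comp hemb (fun y => ρ y ^ m)]
  linarith

/-- Let `m > 1`, `d ≥ 1`, `κ > 0`, and consider the energy
`E[ρ] = (1/(m-1)) ∫ ρ^m dS - (κ/2)‖c_ρ‖² + κ/2` on absolutely continuous probability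
densities on `S^d`. If `ρ` is a global minimizer of `E` and `R` is a rotation of `S^d`
fixing `c_ρ`, then the pushforward density `ρ ∘ R⁻¹` coincides with `ρ`
(almost everywhere with respect to the surface measure); consequently every global
minimizer is invariant under all rotations preserving its centre of mass. -/
theorem stmt_19 (d : ℕ) (hd : 1 ≤ d) (m κ : ℝ) (hm : 1 < m) (hκ : 0 < κ)
    (μ : Measure (EuclideanSpace ℝ (Fin (d + 1))))
    (hμ : μ = (μH[(d : ℝ)]).restrict (Metric.sphere (0 : EuclideanSpace ℝ (Fin (d + 1))) 1))
    (E : (EuclideanSpace ℝ (Fin (d + 1)) → ℝ) → ℝ)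
    (hE : ∀ ρ : EuclideanSpace ℝ (Fin (d + 1)) → ℝ,
      E ρ = (1 / (m - 1)) * (∫ x, ρ x ^ m ∂μ)
        - (κ / 2) * ‖∫ x, ρ x • x ∂μ‖ ^ 2 + κ / 2)
    (ρ : EuclideanSpace ℝ (Fin (d + 1)) → ℝ)
    (hρ0 : ∀ x, 0 ≤ ρ x) (hρint : Integrable ρ μ)
    (hρm : Integrable (fun x => ρ x ^ m) μ)
    (hρ1 : ∫ x, ρ x ∂μ = 1)
    (hmin : ∀ σ : EuclideanSpace ℝ (Fin (d + 1)) → ℝ,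
      (∀ x, 0 ≤ σ x) → Integrable σ μ → Integrable (fun x => σ x ^ m) μ →
      (∫ x, σ x ∂μ) = 1 → E ρ ≤ E σ)
    (R : EuclideanSpace ℝ (Fin (d + 1)) ≃ₗᵢ[ℝ] EuclideanSpace ℝ (Fin (d + 1)))
    (hR : R (∫ x, ρ x • x ∂μ) = ∫ x, ρ x • x ∂μ) :
    (fun x => ρ (R.symm x)) =ᵐ[μ] ρ :=
  stmt_19_general d m κ hm μ hμ E hE ρ hρ0 hρint hρm hρ1 hmin R hR
end
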